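/- (Lemma 1, q-analog of the Cassini–Euler identity) For every n ∈ ℤ and all natural numbers m, ℓ, the 2×2 determinant det [[f(n, x, s), f(n−ℓ, x, q^ℓ·s)], [f(n+m, x, s), f(n+m−ℓ, x, q^ℓ·s)]] equals (−s)^{n−ℓ} · q^{binom(n,2) − binom(ℓ,2)} · f(ℓ, x, s) · f(m, x, q^n·s), where (−s)^{n−ℓ} and q^{binom(n,2)} are interpreted as integer powers of nonzero field elements (binom(n,2) = n(n−1)/2 for n ∈ ℤ). -/

import Mathlib

/-!
As functions of the row index `j`, both columns of the matrix solve the recurrence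
`y (j + 2) = x * y (j + 1) + q ^ j * (q ^ n * s) * y j`: shifting `f(·, x, t)` by `k` turns `t`
into `q ^ k * t`, and `q ^ (n - ℓ) * (q ^ ℓ * s) = q ^ n * s`. Hence the determinant, as a function
of `m`, is a solution vanishing at `m = 0`, so it is its value at `m = 1` times `f(m, x, q^n s)`.
That value is the Casoratian of `f(·, x, s)` and `f(· - ℓ, x, q^ℓ s)` at `n`; it is multiplied by
`-q ^ n * s` at each step in `n`, equals `f(ℓ, x, s)` at `n = ℓ`, and `(-s) ^ n * q ^ binom(n, 2)`
obeys the same first-order recurrence.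
-/

open Finset

variable {K : Type*} [Field K]

noncomputable def qFibPos (q x t : K) : ℕ → K
  | 0 => 0
  | 1 => 1
  | n + 2 => x * qFibPos q x t (n + 1) + q ^ n * t * qFibPos q x t n

noncomputable def qFibNeg (q x t : K) : ℕ → K
  | 0 => 0
  | 1 => q / t
  | m + 2 => (qFibNeg q x t m - x * qFibNeg q x t (m + 1)) * q ^ (m + 2) / t

/-- The Carlitz q-Fibonacci polynomial `f(n, x, t)` for `n : ℤ`, defined by `f 0 = 0`,
`f 1 = 1` and `f n = x * f (n-1) + q^(n-2) * t * f (n-2)`, solved backwards for `n < 0`. -/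
noncomputable def qFib (q x t : K) : ℤ → K
  | Int.ofNat n => qFibPos q x t n
  | Int.negSucc m => qFibNeg q x t (m + 1)

def SolvesRec {R : Type*} [CommRing R] (x : R) (c y : ℤ → R) : Prop :=
  ∀ n, y (n + 2) = x * y (n + 1) + c n * y n

def casoratian {R : Type*} [CommRing R] (y z : ℤ → R) (n : ℤ) : R :=
  y n * z (n + 1) - y (n + 1) * z n

namespace SolvesRec

variable {R : Type*} [CommRing R] {x : R} {c y z : ℤ → R}

theorem mul_sub_mul (hy : SolvesRec x c y) (hz : SolvesRec x c z) (a b : R) :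
    SolvesRec x c (fun n => a * y n - b * z n) := by
  intro n
  simp only [hy n, hz n]
  ring

theorem casoratian_add_one (hy : SolvesRec x c y) (hz : SolvesRec x c z) (n : ℤ) :
    casoratian y z (n + 1) = -c n * casoratian y z n := by
  simp only [casoratian, add_assoc, one_add_one_eq_two, hy n, hz n]
  ring

end SolvesRec

theorem eq_div_mul_of_add_one_eq_mul {u v c : ℤ → K} (hu : ∀ n, u (n + 1) = c n * u n)
    (hv : ∀ n, v (n + 1) = c n * v n) (hv₀ : ∀ n, v n ≠ 0) (k n : ℤ) :
    u n = v n / v k * u k := by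
  induction n using Int.inductionOn' (b := k) with
  | zero => rw [div_self (hv₀ k), one_mul]
  | succ n _ ih => rw [hu, hv, ih]; ring
  | pred n _ ih =>
    have hc : c (n - 1) ≠ 0 := fun h => hv₀ n (by rw [← sub_add_cancel n 1, hv, h, zero_mul])
    apply mul_left_cancel₀ hc
    rw [← hu, ← mul_assoc, ← mul_div_assoc, ← hv, sub_add_cancel, ih]

theorem Int.add_one_mul_self_ediv_two (n : ℤ) : (n + 1) * n / 2 = n * (n - 1) / 2 + n := by
  rw [show (n + 1) * n = n * (n - 1) + n * 2 by ring, Int.add_mul_ediv_right _ _ two_ne_zero]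

section qFib

variable (q x t : K)

theorem qFib_zero : qFib q x t 0 = 0 := rfl

theorem qFib_one : qFib q x t 1 = 1 := rfl

theorem qFib_neg_natCast (k : ℕ) : qFib q x t (-k) = qFibNeg q x t k := by
  cases k with
  | zero => rfl
  | succ k => rfl

theorem qFib_natCast_add_two (k : ℕ) :
    qFib q x t (k + 2) = x * qFib q x t (k + 1) + q ^ k * t * qFib q x t k :=
  rfl

variable {q t}

theorem qFib_add_two (hq : q ≠ 0) (ht : t ≠ 0) (n : ℤ) :
    qFib q x t (n + 2) = x * qFib q x t (n + 1) + q ^ n * t * qFib q x t n := by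
  rcases n with k | _ | k
  · rw [Int.ofNat_eq_natCast]
    exact_mod_cast qFib_natCast_add_two q x t k
  · have h : qFib q x t (-1) = q / t := rfl
    change qFib q x t 1 = x * qFib q x t 0 + q ^ (-1 : ℤ) * t * qFib q x t (-1)
    rw [h, zpow_neg_one, qFib_zero, qFib_one, mul_zero, zero_add]
    field_simp
  · rw [show Int.negSucc (k + 1) = -((k + 2 : ℕ) : ℤ) from rfl,
      show -((k + 2 : ℕ) : ℤ) + 2 = -(k : ℤ) by push_cast; ring,
      show -((k + 2 : ℕ) : ℤ) + 1 = -((k + 1 : ℕ) : ℤ) by push_cast; ring]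
    simp only [qFib_neg_natCast, qFibNeg, zpow_neg, zpow_natCast]
    field_simp
    ring

theorem solvesRec_qFib_shift (hq : q ≠ 0) (ht : t ≠ 0) (k : ℤ) {u : K} (hu : q ^ k * t = u) :
    SolvesRec x (fun j => q ^ j * u) (fun j => qFib q x t (k + j)) := by
  intro j
  dsimp only
  rw [← add_assoc, ← add_assoc, qFib_add_two x hq ht, ← hu, ← mul_assoc, ← zpow_add₀ hq,
    add_comm j k]

theorem SolvesRec.eq_mul_qFib {y : ℤ → K} (hy : SolvesRec x (fun j => q ^ j * t) y) (h₀ : y 0 = 0)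
    (m : ℕ) : y m = y 1 * qFib q x t m := by
  induction m using Nat.twoStepInduction with
  | zero => rw [Nat.cast_zero, h₀, qFib_zero, mul_zero]
  | one => rw [Nat.cast_one, qFib_one, mul_one]
  | more m ih₀ ih₁ =>
    push_cast at ih₁ ⊢
    rw [hy, qFib_natCast_add_two, ih₀, ih₁]
    simp only [zpow_natCast]
    ring

end qFib

theorem casoratian_qFib {q s : K} (x : K) (hq : q ≠ 0) (hs : s ≠ 0) (ℓ : ℕ) (n : ℤ) :
    casoratian (qFib q x s) (fun j => qFib q x (q ^ ℓ * s) (j - ℓ)) n =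
      (-s) ^ (n - ℓ) * q ^ (n * (n - 1) / 2 - (ℓ : ℤ) * ((ℓ : ℤ) - 1) / 2) *
        qFib q x s ℓ := by
  have hf : SolvesRec x (fun j => q ^ j * s) (qFib q x s) := qFib_add_two x hq hs
  have hg : SolvesRec x (fun j => q ^ j * s) (fun j => qFib q x (q ^ ℓ * s) (j - ℓ)) := by
    simpa only [sub_eq_neg_add] using
      solvesRec_qFib_shift x hq (mul_ne_zero (pow_ne_zero ℓ hq) hs) (-ℓ)
        (by rw [zpow_neg, zpow_natCast, inv_mul_cancel_left₀ (pow_ne_zero ℓ hq)])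
  have hns : -s ≠ 0 := neg_ne_zero.2 hs
  set v : ℤ → K := fun j => (-s) ^ j * q ^ (j * (j - 1) / 2) with hv_def
  have hv : ∀ j, v (j + 1) = -(q ^ j * s) * v j := by
    intro j
    simp only [hv_def, add_sub_cancel_right, Int.add_one_mul_self_ediv_two, zpow_add₀ hq,
      zpow_add_one₀ hns]
    ring
  have hv₀ : ∀ j, v j ≠ 0 := fun j => mul_ne_zero (zpow_ne_zero _ hns) (zpow_ne_zero _ hq)
  have base :
      casoratian (qFib q x s) (fun j => qFib q x (q ^ ℓ * s) (j - ℓ)) ℓ = qFib q x s ℓ := by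
    simp [casoratian, qFib_zero, qFib_one]
  rw [eq_div_mul_of_add_one_eq_mul (hf.casoratian_add_one hg) hv hv₀ ℓ n, base, hv_def,
    zpow_sub₀ hns, zpow_sub₀ hq]
  ring

theorem qFib_cassini_euler (q x s : K) (hq : q ≠ 0) (hs : s ≠ 0) (n : ℤ) (m ℓ : ℕ) :
    Matrix.det !![qFib q x s n, qFib q x (q ^ ℓ * s) (n - ℓ);
                  qFib q x s (n + m), qFib q x (q ^ ℓ * s) (n + m - ℓ)] =
      (-s) ^ (n - ℓ) * q ^ (n * (n - 1) / 2 - (ℓ : ℤ) * ((ℓ : ℤ) - 1) / 2) *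
        qFib q x s (ℓ : ℤ) * qFib q x (q ^ n * s) (m : ℤ) := by
  have hF : SolvesRec x (fun j => q ^ j * (q ^ n * s)) (fun j => qFib q x s (n + j)) :=
    solvesRec_qFib_shift x hq hs n rfl
  have hG : SolvesRec x (fun j => q ^ j * (q ^ n * s))
      (fun j => qFib q x (q ^ ℓ * s) (n - ℓ + j)) :=
    solvesRec_qFib_shift x hq (mul_ne_zero (pow_ne_zero ℓ hq) hs) (n - ℓ)
      (by rw [← zpow_natCast, ← mul_assoc, ← zpow_add₀ hq, sub_add_cancel])
  have hE : qFib q x s n * qFib q x (q ^ ℓ * s) (n - ℓ + m) -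
        qFib q x (q ^ ℓ * s) (n - ℓ) * qFib q x s (n + m) =
      (qFib q x s n * qFib q x (q ^ ℓ * s) (n - ℓ + 1) -
        qFib q x (q ^ ℓ * s) (n - ℓ) * qFib q x s (n + 1)) * qFib q x (q ^ n * s) m :=
    (hG.mul_sub_mul hF _ _).eq_mul_qFib x (by simp only [add_zero]; ring) m
  rw [sub_add_eq_add_sub, sub_add_eq_add_sub] at hE
  rw [Matrix.det_fin_two_of, ← casoratian_qFib x hq hs ℓ n, casoratian]
  linear_combination hE
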